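/- (Monotone and unbounded growth) Let d ≥ 2 and for real n ≥ 1 let V_n be the set of the stabilizing pair of BS(n·δ₀, n^{1/d}). Then: (a) if 1 ≤ n < m then V_n ⊆ V_m; and (b) ⋃_{n ≥ 1} V_n = ℤ^d. -/
import Mathlib


open Filter

namespace Sandpile

/-- Lattice sites of `ℤ^d`. -/
abbrev Site (d : ℕ) := Fin d → ℤ

/-- Two sites are neighbours iff their `ℓ¹`-distance equals `1`. -/
def nbr {d : ℕ} (x y : Site d) : Prop := (∑ i, |x i - y i|) = 1

/-- The (combinatorial) boundary of a set `V ⊆ ℤ^d`. -/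
def bdry {d : ℕ} (V : Set (Site d)) : Set (Site d) :=
  {x | x ∈ V ∧ ∃ y, nbr x y ∧ y ∉ V}

/-- The (combinatorial) interior of a set `V ⊆ ℤ^d`. -/
def intr {d : ℕ} (V : Set (Site d)) : Set (Site d) := V \ bdry V

/-- The discrete Laplacian `Δu(x) = (1/(2d)) ∑_{y ∼ x} (u y - u x)`; the `2d`
neighbours of `x` are exactly the points `x ± eᵢ`. -/
noncomputable def lap {d : ℕ} (u : Site d → ℝ) (x : Site d) : ℝ :=
  (1 / (2 * (d : ℝ))) *
    ∑ i : Fin d, ((u (x + Pi.single i 1) - u x) + (u (x - Pi.single i 1) - u x))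

/-- A mass distribution: nonnegative with finite support. -/
def IsMassDist {d : ℕ} (μ : Site d → ℝ) : Prop :=
  (∀ x, 0 ≤ μ x) ∧ (Function.support μ).Finite

/-- Euclidean norm of a lattice point. -/
noncomputable def enorm {d : ℕ} (x : Site d) : ℝ :=
  Real.sqrt (∑ i, ((x i : ℝ)) ^ 2)

/-- `(V, u)` is a stabilizing pair for `BS(μ₀, κ)`: `V` is finite, contains the support
of `μ₀`, and `u : ℤ^d → [0,∞)` vanishes outside the interior of `V`, satisfies
`Δu = -μ₀` on the interior of `V`, `u = 0` on `∂V`, and `μ₀ + Δu ≤ κ` on `∂V`. -/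
def IsStabilizingPair {d : ℕ} (μ0 : Site d → ℝ) (κ : ℝ)
    (V : Set (Site d)) (u : Site d → ℝ) : Prop :=
  V.Finite ∧ Function.support μ0 ⊆ V ∧ (∀ x, 0 ≤ u x) ∧
  (∀ x ∉ intr V, u x = 0) ∧
  (∀ x ∈ intr V, lap u x = -μ0 x) ∧
  (∀ x ∈ bdry V, u x = 0) ∧
  (∀ x ∈ bdry V, μ0 x + lap u x ≤ κ)

/-- *The* stabilizing pair of `BS(μ₀, κ)`: a stabilizing pair whose set of sites is
contained in the set of any other stabilizing pair. -/
def IsMinStabilizingPair {d : ℕ} (μ0 : Site d → ℝ) (κ : ℝ)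
    (V : Set (Site d)) (u : Site d → ℝ) : Prop :=
  IsStabilizingPair μ0 κ V u ∧
  ∀ V' u', IsStabilizingPair μ0 κ V' u' → V ⊆ V'

/-- The point mass `n·δ₀` at the origin. -/
def pointMass (d : ℕ) (n : ℝ) : Site d → ℝ := fun x => if x = 0 then n else 0

noncomputable def nsum {d : ℕ} (u : Site d → ℝ) (x : Site d) : ℝ :=
  ∑ i : Fin d, (u (x + Pi.single i 1) + u (x - Pi.single i 1))

lemma lap_eq {d : ℕ} (hd : d ≠ 0) (u : Site d → ℝ) (x : Site d) :
    lap u x = (1 / (2 * (d : ℝ))) * nsum u x - u x := by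
  have hds : (d : ℝ) ≠ 0 := Nat.cast_ne_zero.mpr hd
  unfold lap nsum
  have h : ∑ i : Fin d, ((u (x + Pi.single i 1) - u x) + (u (x - Pi.single i 1) - u x))
      = (∑ i : Fin d, (u (x + Pi.single i 1) + u (x - Pi.single i 1))) - (d : ℝ) * (2 * u x) := by
    have : ∀ i : Fin d, (u (x + Pi.single i 1) - u x) + (u (x - Pi.single i 1) - u x)
        = (u (x + Pi.single i 1) + u (x - Pi.single i 1)) - 2 * u x := fun i => by ring
    rw [Finset.sum_congr rfl fun i _ => this i, Finset.sum_sub_distrib, Finset.sum_const,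
      Finset.card_univ, Fintype.card_fin, nsmul_eq_mul]
  rw [h]
  field_simp

lemma le_nsum_add {d : ℕ} {u : Site d → ℝ} (hu : ∀ y, 0 ≤ u y) (x : Site d) (j : Fin d) :
    u (x + Pi.single j 1) ≤ nsum u x := by
  have h1 : u (x + Pi.single j 1) ≤ u (x + Pi.single j 1) + u (x - Pi.single j 1) := by
    have := hu (x - Pi.single j 1); linarith
  exact h1.trans (Finset.single_le_sum
    (f := fun i => u (x + Pi.single i 1) + u (x - Pi.single i 1))
    (fun i _ => add_nonneg (hu _) (hu _)) (Finset.mem_univ j))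

lemma le_nsum_sub {d : ℕ} {u : Site d → ℝ} (hu : ∀ y, 0 ≤ u y) (x : Site d) (j : Fin d) :
    u (x - Pi.single j 1) ≤ nsum u x := by
  have h1 : u (x - Pi.single j 1) ≤ u (x + Pi.single j 1) + u (x - Pi.single j 1) := by
    have := hu (x + Pi.single j 1); linarith
  exact h1.trans (Finset.single_le_sum
    (f := fun i => u (x + Pi.single i 1) + u (x - Pi.single i 1))
    (fun i _ => add_nonneg (hu _) (hu _)) (Finset.mem_univ j))

lemma nsum_nonneg {d : ℕ} {u : Site d → ℝ} (hu : ∀ y, 0 ≤ u y) (x : Site d) :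
    0 ≤ nsum u x :=
  Finset.sum_nonneg fun _ _ => add_nonneg (hu _) (hu _)

lemma nbr_add {d : ℕ} (x : Site d) (j : Fin d) : nbr x (x + Pi.single j 1) := by
  unfold nbr
  have h : ∀ i : Fin d, |x i - (x + (Pi.single j 1 : Site d)) i| = if i = j then 1 else 0 := by
    intro i
    rw [Pi.add_apply, Pi.single_apply]
    by_cases h : i = j <;> simp [h]
  rw [Finset.sum_congr rfl fun i _ => h i]
  simp

lemma nbr_sub {d : ℕ} (x : Site d) (j : Fin d) : nbr x (x - Pi.single j 1) := by
  unfold nbr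
  have h : ∀ i : Fin d, |x i - (x - (Pi.single j 1 : Site d)) i| = if i = j then 1 else 0 := by
    intro i
    rw [Pi.sub_apply, Pi.single_apply]
    by_cases h : i = j <;> simp [h]
  rw [Finset.sum_congr rfl fun i _ => h i]
  simp

def anorm {d : ℕ} (x : Site d) : ℕ := ∑ i, (x i).natAbs

lemma anorm_eq_zero {d : ℕ} {x : Site d} (h : anorm x = 0) : x = 0 := by
  funext i
  have := (Finset.sum_eq_zero_iff).mp h i (Finset.mem_univ i)
  simpa [Int.natAbs_eq_zero] using this

lemma anorm_zero {d : ℕ} : anorm (0 : Site d) = 0 := by simp [anorm]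

lemma exists_pred {d : ℕ} (x : Site d) (hx : x ≠ 0) :
    ∃ (w : Site d) (j : Fin d), anorm w + 1 = anorm x ∧
      (x = w + Pi.single j 1 ∨ x = w - Pi.single j 1) := by
  have : ∃ j, x j ≠ 0 := by
    by_contra h
    push_neg at h
    exact hx (funext h)
  obtain ⟨j, hj⟩ := this
  rcases lt_or_gt_of_ne hj with hneg | hpos
  · refine ⟨x + Pi.single j 1, j, ?_, Or.inr (by simp)⟩
    unfold anorm
    rw [← Finset.add_sum_erase _ _ (Finset.mem_univ j),
        ← Finset.add_sum_erase _ (fun i => (x i).natAbs) (Finset.mem_univ j)]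
    have hoff : ∀ i ∈ Finset.univ.erase j,
        ((x + (Pi.single j 1 : Site d)) i).natAbs = (x i).natAbs := by
      intro i hi
      rw [Pi.add_apply, Pi.single_eq_of_ne (Finset.mem_erase.mp hi).1]
      simp
    rw [Finset.sum_congr rfl hoff]
    have : ((x + (Pi.single j 1 : Site d)) j).natAbs + 1 = (x j).natAbs := by
      rw [Pi.add_apply, Pi.single_eq_same]
      omega
    omega
  · refine ⟨x - Pi.single j 1, j, ?_, Or.inl (by simp)⟩
    unfold anorm
    rw [← Finset.add_sum_erase _ _ (Finset.mem_univ j),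
        ← Finset.add_sum_erase _ (fun i => (x i).natAbs) (Finset.mem_univ j)]
    have hoff : ∀ i ∈ Finset.univ.erase j,
        ((x - (Pi.single j 1 : Site d)) i).natAbs = (x i).natAbs := by
      intro i hi
      rw [Pi.sub_apply, Pi.single_eq_of_ne (Finset.mem_erase.mp hi).1]
      simp
    rw [Finset.sum_congr rfl hoff]
    have : ((x - (Pi.single j 1 : Site d)) j).natAbs + 1 = (x j).natAbs := by
      rw [Pi.sub_apply, Pi.single_eq_same]
      omega
    omega


lemma pointMass_ne {d : ℕ} {n : ℝ} {x : Site d} (hx : x ≠ 0) : pointMass d n x = 0 :=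
  if_neg hx

lemma pointMass_zero {d : ℕ} {n : ℝ} : pointMass d n 0 = n := if_pos rfl

lemma lap_smul {d : ℕ} (c : ℝ) (u : Site d → ℝ) (x : Site d) :
    lap (fun y => c * u y) x = c * lap u x := by
  unfold lap
  rw [show ∑ i : Fin d, ((c * u (x + Pi.single i 1) - c * u x) + (c * u (x - Pi.single i 1) - c * u x))
      = c * ∑ i : Fin d, ((u (x + Pi.single i 1) - u x) + (u (x - Pi.single i 1) - u x)) by
    rw [Finset.mul_sum]; exact Finset.sum_congr rfl fun i _ => by ring]
  ring

section Pair
variable {d : ℕ} {n : ℝ} {V : Set (Site d)} {u : Site d → ℝ}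

lemma one_div_d_lt_one (hd : 2 ≤ d) : (1 : ℝ) / d < 1 := by
  have : (2:ℝ) ≤ d := by exact_mod_cast hd
  rw [div_lt_one (by linarith)]
  linarith

lemma one_div_d_le_half (hd : 2 ≤ d) : (1 : ℝ) / d ≤ 1/2 := by
  have : (2:ℝ) ≤ d := by exact_mod_cast hd
  rw [div_le_div_iff₀ (by linarith) (by norm_num)]
  linarith

lemma zero_mem_V (hn : 0 < n)
    (hp : IsStabilizingPair (pointMass d n) (n ^ ((1:ℝ)/d)) V u) : (0 : Site d) ∈ V := by
  apply hp.2.1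
  simp only [Function.mem_support, pointMass_zero]
  exact ne_of_gt hn

lemma zero_mem_intr (hd : 2 ≤ d) (hn : 1 < n)
    (hp : IsStabilizingPair (pointMass d n) (n ^ ((1:ℝ)/d)) V u) : (0 : Site d) ∈ intr V := by
  have hd0 : d ≠ 0 := by omega
  obtain ⟨hfin, hsupp, hpos, hout, hint, hb0, hble⟩ := hp
  have h0V : (0 : Site d) ∈ V := by
    apply hsupp; simp only [Function.mem_support, pointMass_zero]; exact ne_of_gt (by linarith)
  by_contra h
  have hb : (0 : Site d) ∈ bdry V := by
    rcases Set.mem_diff (0 : Site d) |>.not.mp h with h'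
    by_contra hb
    exact h ⟨h0V, hb⟩
  have h1 := hble 0 hb
  have h2 := hb0 0 hb
  rw [pointMass_zero, lap_eq hd0, h2, sub_zero] at h1
  have h3 : 0 ≤ (1 / (2 * (d:ℝ))) * nsum u 0 := by
    apply mul_nonneg
    · positivity
    · exact nsum_nonneg hpos 0
  have h4 : n ^ ((1:ℝ)/d) < n := by
    nth_rewrite 2 [show n = n ^ (1:ℝ) by rw [Real.rpow_one]]
    exact Real.rpow_lt_rpow_of_exponent_lt hn (one_div_d_lt_one hd)
  linarith

lemma u_zero_ge (hd : 2 ≤ d) (hn : 1 < n)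
    (hp : IsStabilizingPair (pointMass d n) (n ^ ((1:ℝ)/d)) V u) : n ≤ u 0 := by
  have hd0 : d ≠ 0 := by omega
  have h0 := zero_mem_intr hd hn hp
  have h1 := hp.2.2.2.2.1 0 h0
  rw [pointMass_zero, lap_eq hd0] at h1
  have h3 : 0 ≤ (1 / (2 * (d:ℝ))) * nsum u 0 := by
    apply mul_nonneg
    · positivity
    · exact nsum_nonneg hp.2.2.1 0
  linarith

lemma main_grow (hd : 2 ≤ d) (hn : 1 < n)
    (hp : IsStabilizingPair (pointMass d n) (n ^ ((1:ℝ)/d)) V u)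
    (r : ℕ) (hbig : (2 * (d:ℝ))^r * n ^ ((1:ℝ)/d) < n) :
    ∀ k, k ≤ r → ∀ y : Site d, anorm y = k → y ∈ intr V ∧ n ≤ (2 * (d:ℝ))^k * u y := by
  have hd0 : d ≠ 0 := by omega
  have hdR : (2:ℝ) ≤ (d:ℝ) := by exact_mod_cast hd
  have h2d : (1:ℝ) ≤ 2 * (d:ℝ) := by linarith
  have h2d0 : (0:ℝ) < 2 * (d:ℝ) := by linarith
  have hκ : (0:ℝ) < n ^ ((1:ℝ)/d) := Real.rpow_pos_of_pos (by linarith) _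
  obtain ⟨hfin, hsupp, hpos, hout, hint, hb0, hble⟩ := hp
  intro k
  induction k with
  | zero =>
    intro _ y hy
    have hy0 : y = 0 := anorm_eq_zero hy
    subst hy0
    refine ⟨zero_mem_intr hd hn ⟨hfin, hsupp, hpos, hout, hint, hb0, hble⟩, ?_⟩
    simpa using u_zero_ge hd hn ⟨hfin, hsupp, hpos, hout, hint, hb0, hble⟩
  | succ k ih =>
    intro hk y hy
    have hy0 : y ≠ 0 := by
      intro h; subst h; rw [anorm_zero] at hy; omega
    obtain ⟨w, j, hw, hcase⟩ := exists_pred y hy0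
    have hwk : anorm w = k := by omega
    obtain ⟨hwInt, hwu⟩ := ih (by omega) w hwk
    have hw_nsum : u w ≤ nsum u y := by
      rcases hcase with h | h
      · have : w = y - Pi.single j 1 := by rw [h]; simp
        rw [this]; exact le_nsum_sub hpos y j
      · have : w = y + Pi.single j 1 := by rw [h]; simp
        rw [this]; exact le_nsum_add hpos y j
    have hyV : y ∈ V := by
      by_contra hyV
      refine hwInt.2 ⟨hwInt.1, y, ?_, hyV⟩
      rcases hcase with h | h
      · rw [h]; exact nbr_add w j
      · rw [h]; exact nbr_sub w j
    have hyB : y ∉ bdry V := by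
      intro hyB
      have h1 := hble y hyB
      have h2 := hb0 y hyB
      rw [pointMass_ne hy0, lap_eq hd0, h2, sub_zero, zero_add] at h1
      -- h1 : (1/(2d)) * nsum u y ≤ κ
      have h3 : nsum u y ≤ 2 * (d:ℝ) * n ^ ((1:ℝ)/d) := by
        rw [div_mul_eq_mul_div, div_le_iff₀ h2d0] at h1
        linarith [h1]
      have h4 : n ≤ (2*(d:ℝ))^(k+1) * n ^ ((1:ℝ)/d) := by
        calc n ≤ (2*(d:ℝ))^k * u w := hwu
        _ ≤ (2*(d:ℝ))^k * nsum u y := by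
            apply mul_le_mul_of_nonneg_left hw_nsum (by positivity)
        _ ≤ (2*(d:ℝ))^k * (2 * (d:ℝ) * n ^ ((1:ℝ)/d)) := by
            apply mul_le_mul_of_nonneg_left h3 (by positivity)
        _ = (2*(d:ℝ))^(k+1) * n ^ ((1:ℝ)/d) := by ring
      have h5 : ((2:ℝ)*(d:ℝ))^(k+1) ≤ (2*(d:ℝ))^r := pow_le_pow_right₀ h2d hk
      have h6 : ((2:ℝ)*(d:ℝ))^(k+1) * n ^ ((1:ℝ)/d) ≤ (2*(d:ℝ))^r * n ^ ((1:ℝ)/d) :=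
        mul_le_mul_of_nonneg_right h5 hκ.le
      linarith
    have hyI : y ∈ intr V := ⟨hyV, hyB⟩
    refine ⟨hyI, ?_⟩
    have hlap := hint y hyI
    rw [pointMass_ne hy0, neg_zero, lap_eq hd0] at hlap
    -- hlap : (1/(2d)) * nsum u y - u y = 0
    have h7 : nsum u y = 2 * (d:ℝ) * u y := by
      field_simp at hlap
      linarith
    have h8 : u w ≤ 2 * (d:ℝ) * u y := by rw [← h7]; exact hw_nsum
    calc n ≤ (2*(d:ℝ))^k * u w := hwu
    _ ≤ (2*(d:ℝ))^k * (2 * (d:ℝ) * u y) := mul_le_mul_of_nonneg_left h8 (by positivity)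
    _ = (2*(d:ℝ))^(k+1) * u y := by ring

end Pair

/-- Monotone and unbounded growth. Let `d ≥ 2` and for real `n ≥ 1`
let `V_n` be the set of the stabilizing pair of `BS(n·δ₀, n^{1/d})`. Then:
(a) if `1 ≤ n < m` then `V_n ⊆ V_m`; and (b) `⋃_{n ≥ 1} V_n = ℤ^d`. -/
theorem stmt13 {d : ℕ} (hd : 2 ≤ d)
    (V : ℝ → Set (Site d)) (u : ℝ → Site d → ℝ)
    (hpair : ∀ n : ℝ, 1 ≤ n →
      IsMinStabilizingPair (pointMass d n) (n ^ ((1 : ℝ) / d)) (V n) (u n)) :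
    (∀ n m : ℝ, 1 ≤ n → n < m → V n ⊆ V m) ∧
    (⋃ (n : ℝ) (_ : 1 ≤ n), V n) = Set.univ := by
  have hdR : (2:ℝ) ≤ (d:ℝ) := by exact_mod_cast hd
  constructor
  · -- part (a)
    intro n m hn hnm
    have hm1 : (1:ℝ) < m := lt_of_le_of_lt hn hnm
    have hn0 : (0:ℝ) < n := by linarith
    have hm0 : (0:ℝ) < m := by linarith
    obtain ⟨hpm, -⟩ := hpair m hm1.le
    obtain ⟨-, hmin⟩ := hpair n hn
    have h0intr : (0 : Site d) ∈ intr (V m) := zero_mem_intr hd hm1 hpm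
    obtain ⟨hfin, hsupp, hpos, hout, hint, hb0, hble⟩ := hpm
    refine hmin (V m) (fun y => (n/m) * u m y) ⟨hfin, ?_, ?_, ?_, ?_, ?_, ?_⟩
    · intro x hx
      rcases eq_or_ne x 0 with rfl | hx0
      · exact h0intr.1
      · exact absurd (pointMass_ne hx0) hx
    · exact fun x => mul_nonneg (div_nonneg hn0.le hm0.le) (hpos x)
    · intro x hx; show n/m * u m x = 0; rw [hout x hx, mul_zero]
    · intro x hx
      rw [lap_smul, hint x hx]
      rcases eq_or_ne x 0 with rfl | hx0
      · rw [pointMass_zero, pointMass_zero]; field_simp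
      · rw [pointMass_ne hx0, pointMass_ne hx0]; ring
    · intro x hx; show n/m * u m x = 0; rw [hb0 x hx, mul_zero]
    · intro x hx
      have hx0 : x ≠ 0 := by
        intro h; subst h; exact h0intr.2 hx
      rw [pointMass_ne hx0, lap_smul, zero_add]
      have hl : lap (u m) x ≤ m ^ ((1:ℝ)/d) := by
        have := hble x hx
        rwa [pointMass_ne hx0, zero_add] at this
      have key : n / m * m ^ ((1:ℝ)/d) ≤ n ^ ((1:ℝ)/d) := by
        have hexp : (0:ℝ) ≤ 1 - 1/d := by
          have := one_div_d_le_half hd; linarith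
        have e3 : n ^ (1 - (1:ℝ)/d) ≤ m ^ (1 - (1:ℝ)/d) :=
          Real.rpow_le_rpow hn0.le hnm.le hexp
        have en : n = n ^ ((1:ℝ)/d) * n ^ (1 - (1:ℝ)/d) := by
          rw [← Real.rpow_add hn0, show (1:ℝ)/d + (1 - 1/d) = 1 by ring, Real.rpow_one]
        have em : m = m ^ ((1:ℝ)/d) * m ^ (1 - (1:ℝ)/d) := by
          rw [← Real.rpow_add hm0, show (1:ℝ)/d + (1 - 1/d) = 1 by ring, Real.rpow_one]
        rw [div_mul_eq_mul_div, div_le_iff₀ hm0]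
        have ha : (0:ℝ) < n ^ ((1:ℝ)/d) := Real.rpow_pos_of_pos hn0 _
        have hb : (0:ℝ) < m ^ ((1:ℝ)/d) := Real.rpow_pos_of_pos hm0 _
        have hc : (0:ℝ) < n ^ (1 - (1:ℝ)/d) := Real.rpow_pos_of_pos hn0 _
        calc n * m ^ ((1:ℝ)/d)
            = n ^ ((1:ℝ)/d) * n ^ (1 - (1:ℝ)/d) * m ^ ((1:ℝ)/d) := by rw [← en]
          _ ≤ n ^ ((1:ℝ)/d) * m ^ (1 - (1:ℝ)/d) * m ^ ((1:ℝ)/d) :=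
              mul_le_mul_of_nonneg_right (mul_le_mul_of_nonneg_left e3 ha.le) hb.le
          _ = n ^ ((1:ℝ)/d) * m := by rw [mul_assoc, mul_comm (m ^ (1 - (1:ℝ)/d)), ← em]
      calc n/m * lap (u m) x ≤ n/m * m ^ ((1:ℝ)/d) :=
            mul_le_mul_of_nonneg_left hl (div_nonneg hn0.le hm0.le)
        _ ≤ n ^ ((1:ℝ)/d) := key
  · -- part (b)
    apply Set.eq_univ_of_forall
    intro x
    rw [Set.mem_iUnion]
    set r : ℕ := anorm x with hr
    set c : ℝ := (2 * (d:ℝ))^r with hc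
    have h2d : (1:ℝ) ≤ 2 * (d:ℝ) := by linarith
    have hc1 : (1:ℝ) ≤ c := one_le_pow₀ h2d
    set nn : ℝ := 2 * c^2 with hnn
    have hn1 : (1:ℝ) < nn := by nlinarith
    refine ⟨nn, ?_⟩
    rw [Set.mem_iUnion]
    refine ⟨hn1.le, ?_⟩
    obtain ⟨hp, -⟩ := hpair nn hn1.le
    have hbig : (2 * (d:ℝ))^r * nn ^ ((1:ℝ)/d) < nn := by
      have hnn0 : (0:ℝ) ≤ nn := by linarith
      have hle : nn ^ ((1:ℝ)/d) ≤ nn ^ ((1:ℝ)/2) :=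
        Real.rpow_le_rpow_of_exponent_le hn1.le (one_div_d_le_half hd)
      have hlt : nn ^ ((1:ℝ)/2) < 2 * c := by
        have h1 : nn < (2*c)^(2:ℕ) := by nlinarith
        have h2 : (((2*c)^(2:ℕ) : ℝ)) ^ ((1:ℝ)/2) = 2*c := by
          rw [← Real.rpow_natCast (2*c) 2, ← Real.rpow_mul (by positivity)]
          norm_num
        calc nn ^ ((1:ℝ)/2) < ((2*c)^(2:ℕ)) ^ ((1:ℝ)/2) :=
              Real.rpow_lt_rpow hnn0 h1 (by norm_num)
          _ = 2*c := h2
      have hcpos : (0:ℝ) < c := by linarith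
      calc (2 * (d:ℝ))^r * nn ^ ((1:ℝ)/d) = c * nn ^ ((1:ℝ)/d) := by rw [hc]
        _ ≤ c * nn ^ ((1:ℝ)/2) := mul_le_mul_of_nonneg_left hle hcpos.le
        _ < c * (2 * c) := by nlinarith [Real.rpow_pos_of_pos (show (0:ℝ) < nn by linarith) ((1:ℝ)/2)]
        _ = nn := by rw [hnn]; ring
    exact (main_grow hd hn1 hp r hbig r le_rfl x rfl).1.1


end Sandpile
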